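/- arXiv:1908.03038 — 2 statements merged into one kernel-verified Lean document; each statement's English description precedes it below -/
import Mathlib

section
/- Let Σ and N be Hermitian positive definite complex s×s matrices and set Σ̃ = Σ + N. Then N⁻¹ − Σ̃⁻¹ = N⁻¹ Σ Σ̃⁻¹, this matrix is Hermitian positive definite, and, defining Ñ = (√((I+Σ̃⁻¹)⁻¹) (N⁻¹ − Σ̃⁻¹) √((I+Σ̃⁻¹)⁻¹))⁻¹ and T = √(Σ̃(Σ̃+I)), one has the factorization Ñ + I = T (Σ⁻¹N + (Σ̃+I)⁻¹) √(I + Σ̃⁻¹). -/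
open Matrix
open scoped ComplexOrder Classical

/-- The (Hermitian positive semidefinite) square root of a positive semidefinite
complex matrix; junk value `0` if the matrix is not positive semidefinite.
For a Hermitian positive definite matrix this is its unique Hermitian positive
definite square root. -/
noncomputable def msqrt {s : ℕ} (A : Matrix (Fin s) (Fin s) ℂ) :
    Matrix (Fin s) (Fin s) ℂ :=
  if h : A.PosSemidef then h.1.eigenvectorUnitary.1 *
    diagonal ((↑) ∘ (√·) ∘ h.1.eigenvalues) * (star h.1.eigenvectorUnitary : Matrix (Fin s) (Fin s) ℂ)
  else 0

/-! Everything is a function of `Σ̃ = S + N` except `N⁻¹ − Σ̃⁻¹`, whose inverse is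
`Σ̃ S⁻¹ N = N + N S⁻¹ N`; this is positive definite, hence so is `N⁻¹ − Σ̃⁻¹`. With
`R = √(I + Σ̃⁻¹)`, which commutes with `Σ̃`, the other two square roots are `R⁻¹` and
`T = Σ̃ R`, since `Σ̃(Σ̃ + I) = Σ̃² (I + Σ̃⁻¹)` is a product of commuting positive matrices.
Then `Ñ + I = R (Σ̃ S⁻¹ N + (I + Σ̃⁻¹)⁻¹) R = R Σ̃ (S⁻¹ N + (Σ̃ + I)⁻¹) R`. -/

open scoped MatrixOrder

namespace CFC

variable {A : Type*} [PartialOrder A] [Ring A] [StarRing A] [TopologicalSpace A]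
  [StarOrderedRing A] [Algebra ℝ A] [ContinuousFunctionalCalculus ℝ A IsSelfAdjoint]
  [NonnegSpectrumClass ℝ A] [IsTopologicalRing A] [T2Space A]

lemma commute_sqrt_left {a b : A} (h : Commute a b) : Commute (sqrt a) b := by
  rw [sqrt_eq_cfc]
  exact h.cfc_nnreal _

lemma sqrt_mul_of_commute {a b : A} (ha : 0 ≤ a) (hb : 0 ≤ b) (h : Commute a b) :
    sqrt (a * b) = sqrt a * sqrt b := by
  have hab : Commute (sqrt a) (sqrt b) := (commute_sqrt_left (commute_sqrt_left h).symm).symm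
  refine sqrt_unique ?_ (hab.mul_nonneg (sqrt_nonneg a) (sqrt_nonneg b))
  rw [hab.symm.mul_mul_mul_comm, sqrt_mul_sqrt_self a, sqrt_mul_sqrt_self b]

end CFC

lemma msqrt_eq_cfcSqrt {s : ℕ} (A : Matrix (Fin s) (Fin s) ℂ) : msqrt A = CFC.sqrt A := by
  by_cases hA : A.PosSemidef
  · rw [msqrt, dif_pos hA, CFC.sqrt_eq_real_sqrt A hA.nonneg, cfcₙ_eq_cfc, hA.1.cfc_eq,
      IsHermitian.cfc, Unitary.conjStarAlgAut_apply]
    rfl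
  · rw [msqrt, dif_neg hA, CFC.sqrt_of_not_nonneg (mt LE.le.posSemidef hA)]

namespace Matrix

variable {n α : Type*} [Fintype n] [DecidableEq n] [CommRing α]

lemma commute_nonsing_inv {A : Matrix n n α} (hA : IsUnit A.det) : Commute A A⁻¹ :=
  (mul_nonsing_inv A hA).trans (nonsing_inv_mul A hA).symm

lemma inv_one_add_inv {E : Matrix n n α} (hE : IsUnit E.det) : (1 + E⁻¹)⁻¹ = E * (E + 1)⁻¹ := by
  rw [show 1 + E⁻¹ = (E + 1) * E⁻¹ by rw [add_mul, mul_nonsing_inv E hE, one_mul, add_comm],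
    mul_inv_rev, nonsing_inv_nonsing_inv E hE]

lemma inv_inv_sub_inv {S N : Matrix n n α} (hN : IsUnit N.det) (hSN : IsUnit (S + N).det) :
    (N⁻¹ - (S + N)⁻¹)⁻¹ = (S + N) * S⁻¹ * N := by
  rw [inv_sub_inv (by simp [isUnit_iff_isUnit_det, hN, hSN]), add_sub_cancel_right, mul_inv_rev,
    mul_inv_rev, nonsing_inv_nonsing_inv N hN, nonsing_inv_nonsing_inv _ hSN, mul_assoc]

lemma inv_conj_inv_add_one {R D : Matrix n n α} (hR : IsUnit R.det) :
    (R⁻¹ * D * R⁻¹)⁻¹ + 1 = R * (D⁻¹ + (R * R)⁻¹) * R := by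
  have hRR : R * (R * R)⁻¹ * R = 1 := by
    rw [mul_inv_rev, ← mul_assoc, mul_nonsing_inv R hR, one_mul, nonsing_inv_mul R hR]
  rw [mul_inv_rev, mul_inv_rev, nonsing_inv_nonsing_inv R hR, mul_add, add_mul, hRR, mul_assoc]

end Matrix

namespace Matrix.PosDef

variable {n 𝕜 : Type*} [Fintype n] [DecidableEq n] [RCLike 𝕜]

lemma inv_sub_inv_add {S N : Matrix n n 𝕜} (hS : S.PosDef) (hN : N.PosDef) :
    (N⁻¹ - (S + N)⁻¹).PosDef := by
  have hK : (S + N) * S⁻¹ * N = N + Nᴴ * S⁻¹ * N := by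
    rw [add_mul, add_mul, mul_nonsing_inv S ((isUnit_iff_isUnit_det S).mp hS.isUnit), one_mul,
      hN.1.eq]
  rw [← posDef_inv_iff, inv_inv_sub_inv ((isUnit_iff_isUnit_det N).mp hN.isUnit)
    ((isUnit_iff_isUnit_det _).mp (hS.add hN).isUnit), hK]
  exact hN.add (hS.inv.conjTranspose_mul_mul_same (mulVec_injective_iff_isUnit.mpr hN.isUnit))

lemma cfcSqrt_mul_add_one {E : Matrix n n 𝕜} (hE : E.PosDef) :
    CFC.sqrt (E * (E + 1)) = E * CFC.sqrt (1 + E⁻¹) := by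
  have hE' : IsUnit E.det := (isUnit_iff_isUnit_det E).mp hE.isUnit
  have hcomm : Commute (E * E) (1 + E⁻¹) :=
    ((Commute.one_right E).add_right (commute_nonsing_inv hE')).mul_left
      ((Commute.one_right E).add_right (commute_nonsing_inv hE'))
  rw [show E * (E + 1) = E * E * (1 + E⁻¹) by
      rw [mul_assoc, mul_add E 1, mul_one, mul_nonsing_inv E hE', mul_add, mul_one, add_comm],
    CFC.sqrt_mul_of_commute ((Commute.refl E).mul_nonneg hE.posSemidef.nonneg hE.posSemidef.nonneg)
      (PosDef.one.add hE.inv).posSemidef.nonneg hcomm, CFC.sqrt_mul_self E hE.posSemidef.nonneg]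

end Matrix.PosDef

/-- Let `S` and `N` be Hermitian positive definite complex `s × s` matrices and set
`Σ̃ = S + N`.  Then `N⁻¹ − Σ̃⁻¹ = N⁻¹ S Σ̃⁻¹`, this matrix is Hermitian positive
definite, and, with `Ñ = (√((I+Σ̃⁻¹)⁻¹) (N⁻¹ − Σ̃⁻¹) √((I+Σ̃⁻¹)⁻¹))⁻¹` and
`T = √(Σ̃(Σ̃+I))`, one has `Ñ + I = T (S⁻¹ N + (Σ̃+I)⁻¹) √(I + Σ̃⁻¹)`. -/
theorem stmt1 {s : ℕ} (S N : Matrix (Fin s) (Fin s) ℂ)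
    (hS : S.PosDef) (hN : N.PosDef) :
    N⁻¹ - (S + N)⁻¹ = N⁻¹ * S * (S + N)⁻¹ ∧
    (N⁻¹ - (S + N)⁻¹).PosDef ∧
    (msqrt ((1 + (S + N)⁻¹)⁻¹) * (N⁻¹ - (S + N)⁻¹) * msqrt ((1 + (S + N)⁻¹)⁻¹))⁻¹ + 1
      = msqrt ((S + N) * (S + N + 1)) * (S⁻¹ * N + (S + N + 1)⁻¹)
          * msqrt (1 + (S + N)⁻¹) := by
  have hE : (S + N).PosDef := hS.add hN
  refine ⟨by rw [Matrix.inv_sub_inv (by simp [hN.isUnit, hE.isUnit]), add_sub_cancel_right],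
    hS.inv_sub_inv_add hN, ?_⟩
  have unit_det {A : Matrix (Fin s) (Fin s) ℂ} (hA : A.PosDef) : IsUnit A.det :=
    (isUnit_iff_isUnit_det A).mp hA.isUnit
  have hX : (1 + (S + N)⁻¹).PosDef := PosDef.one.add hE.inv
  set R := CFC.sqrt (1 + (S + N)⁻¹)
  have hR : R.PosDef := hX.isStrictlyPositive.sqrt.posDef
  have hRE : Commute R (S + N) := CFC.commute_sqrt_left
    ((Commute.one_left _).add_left (commute_nonsing_inv (unit_det hE)).symm)
  simp only [msqrt_eq_cfcSqrt, ← hX.posSemidef.inv_sqrt, hE.cfcSqrt_mul_add_one]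
  calc (R⁻¹ * (N⁻¹ - (S + N)⁻¹) * R⁻¹)⁻¹ + 1
      = R * ((N⁻¹ - (S + N)⁻¹)⁻¹ + (1 + (S + N)⁻¹)⁻¹) * R := by
        rw [inv_conj_inv_add_one (unit_det hR), CFC.sqrt_mul_sqrt_self _ hX.posSemidef.nonneg]
    _ = R * ((S + N) * (S⁻¹ * N + (S + N + 1)⁻¹)) * R := by
        rw [inv_inv_sub_inv (unit_det hN) (unit_det hE), inv_one_add_inv (unit_det hE),
          mul_add (S + N), mul_assoc (S + N)]
    _ = (S + N) * R * (S⁻¹ * N + (S + N + 1)⁻¹) * R := by rw [← mul_assoc, hRE.eq]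
end

section
/- Let s ∈ ℕ, and let ω_1, …, ω_s > 0, n_1, …, n_s ≥ 0 be real numbers. Let ν > 0 and set s*_j = max(ν/ω_j − n_j − 1, 0) and E = Σ_j ω_j s*_j. Then for every t = (t_1, …, t_s) with t_j ≥ 0 and Σ_j ω_j t_j ≤ E, one has Σ_j log(1 + t_j/(n_j+1)) ≤ Σ_j log(1 + s*_j/(n_j+1)); that is, the supremum of Σ_j log(1 + t_j/(n_j+1)) over the constraint set equals Σ_j log(1 + s*_j/(n_j+1)) and is attained at the water-filling point s*. -/
/-!
Concavity of `log` gives the tangent-line bound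
`log (1 + t/a) - log (1 + s/a) ≤ (t - s)/(a + s)` at every coordinate, with `a_j = n_j + 1`.
At the water level `ν` the slope `1/(a_j + s*_j)` equals `ω_j/ν` where `s*_j > 0` and is at
most `ω_j/ν` where `s*_j = 0`, so the total gain of any `t` over `s*` is at most `ν⁻¹ Σ_j ω_j (t_j - s*_j) ≤ 0`.
-/

open Finset Real

theorem Real.log_one_add_div_sub_log_one_add_div_le {a s t : ℝ} (ha : 0 < a) (hs : 0 < a + s)
    (ht : 0 < a + t) : log (1 + t / a) - log (1 + s / a) ≤ (t - s) / (a + s) := by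
  have hs' : 0 < 1 + s / a := by rw [one_add_div ha.ne']; positivity
  have ht' : 0 < 1 + t / a := by rw [one_add_div ha.ne']; positivity
  have hratio : (1 + t / a) / (1 + s / a) = (a + t) / (a + s) := by
    field_simp
  calc log (1 + t / a) - log (1 + s / a)
      = log ((1 + t / a) / (1 + s / a)) := (log_div ht'.ne' hs'.ne').symm
    _ ≤ (1 + t / a) / (1 + s / a) - 1 := log_le_sub_one_of_pos (div_pos ht' hs')
    _ = (t - s) / (a + s) := by
        rw [hratio]
        field_simp
        ring

theorem Real.log_one_add_div_sub_log_waterLevel_le {ω a ν t : ℝ} (hω : 0 < ω) (ha : 0 < a)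
    (hν : 0 < ν) (ht : 0 ≤ t) :
    log (1 + t / a) - log (1 + max (ν / ω - a) 0 / a) ≤
      ν⁻¹ * (ω * (t - max (ν / ω - a) 0)) := by
  rcases le_or_gt (ν / ω - a) 0 with hdry | hwet
  · rw [max_eq_right hdry]
    have hνa : ν ≤ ω * a := by
      rw [sub_nonpos, div_le_iff₀ hω] at hdry
      linarith
    calc log (1 + t / a) - log (1 + 0 / a)
        ≤ (t - 0) / (a + 0) := log_one_add_div_sub_log_one_add_div_le ha (by simpa) (by linarith)
      _ = t / a := by simp
      _ ≤ ν⁻¹ * (ω * (t - 0)) := by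
        rw [div_le_iff₀ ha, sub_zero, ← div_eq_inv_mul, div_mul_eq_mul_div, le_div_iff₀ hν]
        nlinarith
  · rw [max_eq_left hwet.le]
    calc log (1 + t / a) - log (1 + (ν / ω - a) / a)
        ≤ (t - (ν / ω - a)) / (a + (ν / ω - a)) :=
          log_one_add_div_sub_log_one_add_div_le ha (by linarith) (by linarith)
      _ = ν⁻¹ * (ω * (t - (ν / ω - a))) := by
        field_simp [hν.ne']
        ring

theorem Finset.sum_le_sum_of_sub_le_mul_sub {ι : Type*} (S : Finset ι) {f g w x y : ι → ℝ}
    {c : ℝ} (hc : 0 ≤ c) (h : ∀ j ∈ S, f j - g j ≤ c * (w j * (x j - y j)))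
    (hxy : ∑ j ∈ S, w j * x j ≤ ∑ j ∈ S, w j * y j) :
    ∑ j ∈ S, f j ≤ ∑ j ∈ S, g j := by
  have hgain : ∑ j ∈ S, f j - ∑ j ∈ S, g j ≤ c * (∑ j ∈ S, w j * x j - ∑ j ∈ S, w j * y j) := by
    simpa only [← sum_sub_distrib, mul_sub, mul_sum] using sum_le_sum h
  nlinarith

/-- Water-filling: let `ω_j > 0`, `n_j ≥ 0`, `ν > 0`; set
`s*_j = max (ν/ω_j − n_j − 1) 0` and `E = Σ_j ω_j s*_j`.  Then
`Σ_j log (1 + s*_j/(n_j+1))` is the greatest value of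
`Σ_j log (1 + t_j/(n_j+1))` over all `t` with `t_j ≥ 0` and `Σ_j ω_j t_j ≤ E`,
attained at the water-filling point `s*`. -/
theorem stmt13 (s : ℕ) (ω n : Fin s → ℝ) (hω : ∀ j, 0 < ω j) (hn : ∀ j, 0 ≤ n j)
    (ν : ℝ) (hν : 0 < ν)
    (sstar : Fin s → ℝ) (hsstar : sstar = fun j => max (ν / ω j - n j - 1) 0)
    (E : ℝ) (hE : E = ∑ j, ω j * sstar j) :
    IsGreatest
      ((fun t : Fin s → ℝ => ∑ j, Real.log (1 + t j / (n j + 1))) ''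
        {t | (∀ j, 0 ≤ t j) ∧ ∑ j, ω j * t j ≤ E})
      (∑ j, Real.log (1 + sstar j / (n j + 1))) := by
  have hsstar_nonneg : ∀ j, 0 ≤ sstar j := fun j => by rw [hsstar]; exact le_max_right _ _
  refine ⟨⟨sstar, ⟨hsstar_nonneg, hE.ge⟩, rfl⟩, ?_⟩
  rintro _ ⟨t, ⟨ht, htE⟩, rfl⟩
  subst hsstar hE
  refine sum_le_sum_of_sub_le_mul_sub univ (inv_nonneg.2 hν.le) (fun j _ => ?_) htE
  simpa only [sub_sub] using
    log_one_add_div_sub_log_waterLevel_le (hω j) (by linarith [hn j]) hν (ht j)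
end
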